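/- Let 𝔄 be a pre-left Hilbert algebra with completion H, and let K ⊆ H be the closed real-linear span of elements of the form a#a for a ∈ 𝔄 (with H regarded as a real Hilbert space via the real part of the inner product). If the right Hilbert algebra 𝔄' (the set of right bounded vectors v admitting v♭ with π'(v♭) = π'(v)*) is dense in H, then K ∩ iK = {0}. -/

import Mathlib

/-! For `v ∈ 𝔄'` with flat `v♭`, the `*`-property of `π` gives `⟪v♭, a♯a⟫ = conj ⟪v, a♯a⟫`,
and since both sides are continuous and real-linear in the second slot this identity
extends to all of `K`. If `u = I w` with `u, w ∈ K`, comparing the identity at `u` and at `w`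
forces `⟪v, u⟫ = 0`. So `u` is orthogonal to the dense set `𝔄'`, hence `u = 0`. -/

section

open ContinuousLinearMap ComplexConjugate

variable {H : Type*} [NormedAddCommGroup H] [InnerProductSpace ℂ H]

theorem inner_smul_I_eq_zero_of_inner_eq_conj {v v' w : H}
    (hw : inner ℂ v' w = conj (inner ℂ v w))
    (hIw : inner ℂ v' (Complex.I • w) = conj (inner ℂ v (Complex.I • w))) :
    inner ℂ v (Complex.I • w) = 0 := by
  rw [inner_smul_right, inner_smul_right, hw, map_mul, Complex.conj_I] at hIw
  have hconj : conj (inner ℂ v w) = 0 := by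
    linear_combination (-Complex.I / 2) * hIw + conj (inner ℂ v w) * Complex.I_sq
  rw [inner_smul_right, (map_eq_zero _).mp hconj, mul_zero]

variable [CompleteSpace H] {A : Submodule ℂ H}

/-- `v ∈ 𝔄'` with `v♭ = v'`: `Tv`, `Tv'` are the bounded operators `π'(v)`, `π'(v')`. -/
def IsRightFlat (π : A → H →L[ℂ] H) (v v' : H) : Prop :=
  ∃ Tv Tv' : H →L[ℂ] H, (∀ a : A, Tv a = π a v) ∧ (∀ a : A, Tv' a = π a v') ∧ Tv' = adjoint Tv

theorem IsRightFlat.inner_generator {π : A → H →L[ℂ] H} {s : A → A}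
    (hsinv : ∀ a : A, s (s a) = a)
    (hstar : ∀ (a : A) (v w : H), (inner ℂ (π a v) w : ℂ) = inner ℂ v (π (s a) w))
    {v v' : H} (hflat : IsRightFlat π v v') (a : A) :
    inner ℂ v' (π (s a) a) = conj (inner ℂ v (π (s a) a)) := by
  obtain ⟨Tv, Tv', hTv, hTv', rfl⟩ := hflat
  have hsa : ∀ x : H, inner ℂ (π (s a) a) x = inner ℂ (a : H) (π a x) := fun x => by
    rw [hstar, hsinv]
  rw [← inner_conj_symm, ← inner_conj_symm v, hsa, hsa, ← hTv, ← hTv', adjoint_inner_right,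
    inner_conj_symm, Complex.conj_conj]

theorem IsRightFlat.inner_mem_closure_span {π : A → H →L[ℂ] H} {s : A → A}
    (hsinv : ∀ a : A, s (s a) = a)
    (hstar : ∀ (a : A) (v w : H), (inner ℂ (π a v) w : ℂ) = inner ℂ v (π (s a) w))
    {v v' : H} (hflat : IsRightFlat π v v') {x : H}
    (hx : x ∈ (Submodule.span ℝ {x : H | ∃ a : A, x = π (s a) (a : H)}).topologicalClosure) :
    inner ℂ v' x = conj (inner ℂ v x) := by
  let f : H →L[ℝ] ℂ := (innerSL ℂ v').restrictScalars ℝ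
  let g : H →L[ℝ] ℂ :=
    Complex.conjCLE.toContinuousLinearMap.comp ((innerSL ℂ v).restrictScalars ℝ)
  have hfg : Set.EqOn f g {x : H | ∃ a : A, x = π (s a) (a : H)} := by
    rintro _ ⟨a, rfl⟩
    exact hflat.inner_generator hsinv hstar a
  exact eqOn_closure_span hfg (by rwa [← Submodule.topologicalClosure_coe])

end

theorem stmt3_general {H : Type*} [NormedAddCommGroup H] [InnerProductSpace ℂ H] [CompleteSpace H]
    (A : Submodule ℂ H)
    (π : A → (H →L[ℂ] H)) (s : A → A)
    (hsinv : ∀ a : A, s (s a) = a)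
    (hstar : ∀ (a : A) (v w : H), (inner ℂ (π a v) w : ℂ) = inner ℂ v (π (s a) w))
    (K : Submodule ℝ H)
    (hK : K = (Submodule.span ℝ {x : H | ∃ a : A, x = π (s a) (a : H)}).topologicalClosure)
    -- density of the right Hilbert algebra A'
    (hdense : Dense {v : H | ∃ (v' : H) (Tv Tv' : H →L[ℂ] H),
        (∀ a : A, Tv a = π a v) ∧ (∀ a : A, Tv' a = π a v') ∧
          Tv' = ContinuousLinearMap.adjoint Tv}) :
    ∀ v : H, v ∈ K → (∃ w, w ∈ K ∧ v = Complex.I • w) → v = 0 := by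
  rintro _ hu ⟨w, hw, rfl⟩
  subst hK
  refine hdense.eq_zero_of_inner_right (𝕜 := ℂ) ?_
  rintro v ⟨v', hflat : IsRightFlat π v v'⟩
  exact inner_smul_I_eq_zero_of_inner_eq_conj (hflat.inner_mem_closure_span hsinv hstar hw)
    (hflat.inner_mem_closure_span hsinv hstar hu)

/-- Let `A` be a pre-left Hilbert algebra (dense subspace of a complex
Hilbert space `H` with left regular representation `π` and involution `s`), and let
`K` be the closed real-linear span of the elements `a# a = π(a#) a`.  If the right
Hilbert algebra `A'` (the set of right bounded vectors `v` admitting `v♭` with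
`π'(v♭) = π'(v)*`) is dense in `H`, then `K ∩ iK = {0}`. -/
theorem stmt3 {H : Type*} [NormedAddCommGroup H] [InnerProductSpace ℂ H] [CompleteSpace H]
    (A : Submodule ℂ H) (hA : Dense (A : Set H))
    (π : A → (H →L[ℂ] H)) (s : A → A)
    (hsinv : ∀ a : A, s (s a) = a)
    (hstar : ∀ (a : A) (v w : H), (inner ℂ (π a v) w : ℂ) = inner ℂ v (π (s a) w))
    (K : Submodule ℝ H)
    (hK : K = (Submodule.span ℝ {x : H | ∃ a : A, x = π (s a) (a : H)}).topologicalClosure)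
    -- density of the right Hilbert algebra A'
    (hdense : Dense {v : H | ∃ (v' : H) (Tv Tv' : H →L[ℂ] H),
        (∀ a : A, Tv a = π a v) ∧ (∀ a : A, Tv' a = π a v') ∧
          Tv' = ContinuousLinearMap.adjoint Tv}) :
    ∀ v : H, v ∈ K → (∃ w, w ∈ K ∧ v = Complex.I • w) → v = 0 :=
  stmt3_general A π s hsinv hstar K hK hdense
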